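/- arXiv:1605.07829 — 4 statements merged into one kernel-verified Lean document; each statement's English description precedes it below -/
import Mathlib

section
/- Let T be a finite nonempty collection of STL triangles in ℝ³, let v be a vertex of T whose first coordinate is maximal among all vertices of T, and let p = v + (1, 0, 0). Then the closed straight segment from p to v intersects the geometric realization |T| exactly in the single point v (note v ∈ |T| since v is a vertex of some triangle). Consequently v is reachable from p, i.e., the extreme vertex v belongs to the outer hull of |T| relative to p, and can serve as a correctly identified seed for the outer-hull extraction. -/
/-- An STL triangle: a triple of points of ℝ³. -/
abbrev STLTriangle := EuclideanSpace ℝ (Fin 3) × EuclideanSpace ℝ (Fin 3) × EuclideanSpace ℝ (Fin 3)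

/-- The geometric realization of an STL triangle: the convex hull of its three vertices. -/
def triangleRealization (t : STLTriangle) : Set (EuclideanSpace ℝ (Fin 3)) :=
  convexHull ℝ {t.1, t.2.1, t.2.2}

/-- The geometric realization of a finite collection of STL triangles. -/
def stlRealization (T : Finset STLTriangle) : Set (EuclideanSpace ℝ (Fin 3)) :=
  ⋃ t ∈ T, triangleRealization t

/-- The vertex set of a finite collection of STL triangles. -/
def vertexSet (T : Finset STLTriangle) : Set (EuclideanSpace ℝ (Fin 3)) :=
  ⋃ t ∈ T, {t.1, t.2.1, t.2.2}

/-- `q` is reachable from `p` with respect to `K`: there is a continuous path from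
`p` to `q` all of whose points lying in `K` equal `q`. -/
def ReachableFrom (K : Set (EuclideanSpace ℝ (Fin 3))) (p q : EuclideanSpace ℝ (Fin 3)) : Prop :=
  ∃ γ : Path p q, ∀ t : unitInterval, γ t ∈ K → γ t = q

lemma realization_le (T : Finset STLTriangle) (v : EuclideanSpace ℝ (Fin 3))
    (hmax : ∀ w ∈ vertexSet T, w 0 ≤ v 0) :
    ∀ x ∈ stlRealization T, x 0 ≤ v 0 := by
  intro x hx
  simp only [stlRealization, Set.mem_iUnion] at hx
  obtain ⟨t, ht, hxt⟩ := hx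
  have hconv : Convex ℝ {x : EuclideanSpace ℝ (Fin 3) | x 0 ≤ v 0} := by
    intro a ha b hb s r hs hr hsr
    simp only [Set.mem_setOf_eq] at *
    have : (s • a + r • b) 0 = s * a 0 + r * b 0 := by
      simp [PiLp.add_apply, PiLp.smul_apply, smul_eq_mul]
    rw [this]
    calc s * a 0 + r * b 0 ≤ s * v 0 + r * v 0 := by
          gcongr
      _ = v 0 := by rw [← add_mul, hsr, one_mul]
  have hsub : ({t.1, t.2.1, t.2.2} : Set (EuclideanSpace ℝ (Fin 3))) ⊆
      {x : EuclideanSpace ℝ (Fin 3) | x 0 ≤ v 0} := by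
    intro w hw
    apply hmax
    simp only [vertexSet, Set.mem_iUnion]
    exact ⟨t, ht, hw⟩
  exact hconv.convexHull_subset_iff.mpr hsub hxt

/-- Let `v` be a vertex of maximal first coordinate of a finite nonempty STL
collection `T` and `p = v + (1, 0, 0)`. Then the closed segment from `p` to `v`
meets the realization `|T|` exactly in `{v}`; consequently the extreme vertex `v`
is reachable from `p`, i.e. `v` belongs to the outer hull of `|T|` relative to
`p` and can serve as a correctly identified seed. -/
theorem extreme_vertex_reachable (T : Finset STLTriangle) (hT : T.Nonempty)
    (v : EuclideanSpace ℝ (Fin 3)) (hv : v ∈ vertexSet T)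
    (hmax : ∀ w ∈ vertexSet T, w 0 ≤ v 0) :
    segment ℝ (v + EuclideanSpace.single (0 : Fin 3) (1 : ℝ)) v ∩ stlRealization T = {v} ∧
    ReachableFrom (stlRealization T) (v + EuclideanSpace.single (0 : Fin 3) (1 : ℝ)) v := by
  set p := v + EuclideanSpace.single (0 : Fin 3) (1 : ℝ) with hp
  have hvK : v ∈ stlRealization T := by
    simp only [vertexSet, Set.mem_iUnion] at hv
    obtain ⟨t, ht, hvt⟩ := hv
    simp only [stlRealization, Set.mem_iUnion]
    exact ⟨t, ht, subset_convexHull ℝ _ hvt⟩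
  have hp0 : p 0 = v 0 + 1 := by
    simp [hp, PiLp.add_apply, EuclideanSpace.single_apply]
  have hseg : ∀ x ∈ segment ℝ p v, x ∈ stlRealization T → x = v := by
    rintro x ⟨a, b, ha, hb, hab, rfl⟩ hxK
    have hle := realization_le T v hmax _ hxK
    have hx0 : (a • p + b • v) 0 = a * (v 0 + 1) + b * v 0 := by
      simp [PiLp.add_apply, PiLp.smul_apply, smul_eq_mul, hp0]
    rw [hx0] at hle
    have hrw : a * (v 0 + 1) + b * v 0 = (a + b) * v 0 + a := by ring
    rw [hrw, hab, one_mul] at hle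
    have ha0 : a = 0 := by linarith
    have hb1 : b = 1 := by linarith
    simp [ha0, hb1]
  constructor
  · apply Set.eq_singleton_iff_unique_mem.mpr
    refine ⟨⟨right_mem_segment ℝ p v, hvK⟩, ?_⟩
    rintro x ⟨hx1, hx2⟩
    exact hseg x hx1 hx2
  · refine ⟨⟨⟨fun t => (1 - (t : ℝ)) • p + (t : ℝ) • v, ?_⟩, ?_, ?_⟩, ?_⟩
    · exact ((continuous_const.sub continuous_subtype_val).smul continuous_const).add
        (continuous_subtype_val.smul continuous_const)
    · norm_num
    · norm_num
    intro t htK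
    refine hseg _ ?_ htK
    exact ⟨1 - (t : ℝ), t, by linarith [t.2.2], t.2.1, by ring, rfl⟩
end

section
/- Let K ⊆ ℝ³ be a closed set, let p ∉ K, let E be the path component of p in ℝ³ \ K, let M' be the set of points of K reachable from p (the outer hull of K relative to p), and let O = E ∪ M'. Then the topological frontier of O is contained in K. In other words, the solid outer hull (defined as the boundary of O) is a subset of the polyhedron |K| itself. -/
open Set

theorem IsOpen.frontier_pathComponentIn_subset_compl {X : Type*} [TopologicalSpace X]
    [LocallyPathConnectedSpace X] {U : Set X} (hU : IsOpen U) (x : X) :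
    frontier (pathComponentIn U x) ⊆ Uᶜ := by
  intro y hy hyU
  obtain ⟨z, hzy, hzx⟩ := mem_closure_iff.mp hy.1 _ (hU.pathComponentIn y)
    (mem_pathComponentIn_self hyU)
  have hyx : y ∈ pathComponentIn U x := by
    rw [← pathComponentIn_congr hzx, pathComponentIn_congr hzy]
    exact mem_pathComponentIn_self hyU
  exact (hU.pathComponentIn x).inter_frontier_eq.subset ⟨hyx, hy⟩

theorem solid_outer_hull_subset_general (K : Set (EuclideanSpace ℝ (Fin 3))) (hK : IsClosed K)
    (p : EuclideanSpace ℝ (Fin 3)) :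
    frontier (pathComponentIn Kᶜ p ∪ {q ∈ K | ReachableFrom K p q}) ⊆ K := by
  have hE : frontier (pathComponentIn Kᶜ p) ⊆ K := by
    simpa using hK.isOpen_compl.frontier_pathComponentIn_subset_compl p
  have hM : frontier {q ∈ K | ReachableFrom K p q} ⊆ K :=
    frontier_subset_closure.trans (closure_minimal (sep_subset K _) hK)
  calc frontier (pathComponentIn Kᶜ p ∪ {q ∈ K | ReachableFrom K p q})
      ⊆ frontier (pathComponentIn Kᶜ p) ∪ frontier {q ∈ K | ReachableFrom K p q} :=
        (frontier_union_subset _ _).trans (union_subset_union inter_subset_left inter_subset_right)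
    _ ⊆ K := union_subset hE hM

/-- Let `K ⊆ ℝ³` be closed, `p ∉ K`, `E` the path component of `p` in `Kᶜ`, `M'`
the outer hull of `K` relative to `p` (the points of `K` reachable from `p`), and
`O = E ∪ M'`. Then the topological frontier of `O` is contained in `K`: the solid
outer hull (the boundary of `O`) is a subset of the polyhedron itself. -/
theorem solid_outer_hull_subset (K : Set (EuclideanSpace ℝ (Fin 3))) (hK : IsClosed K)
    (p : EuclideanSpace ℝ (Fin 3)) (hp : p ∉ K) :
    frontier (pathComponentIn Kᶜ p ∪ {q ∈ K | ReachableFrom K p q}) ⊆ K :=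
  solid_outer_hull_subset_general K hK p
end

section
/- Let K be a bounded subset of an affine plane in ℝ³ (for example, the geometric realization of a collection of STL triangles all of whose vertices lie in a common plane, such as a 'flattened cube' whose vertices all have third coordinate zero), and let p ∈ ℝ³ \ K. Then: (a) ℝ³ \ K is path-connected; (b) every point q ∈ K is reachable from p, i.e., there is a continuous path from p to q meeting K only at q. Consequently, the set O equals all of ℝ³ and the solid outer hull of K (the frontier of O) is empty: a flat model encloses no solid and is therefore not printable. -/
open Set Bornology
open scoped Convex

theorem exists_path_range_inter_subset_of_hub {X : Type*} [TopologicalSpace X] {K : Set X}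
    {u : X} (hu : ∀ q, ∃ γ : Path u q, range γ ∩ K ⊆ {q}) {a : X} (ha : a ∉ K) (b : X) :
    ∃ γ : Path a b, range γ ∩ K ⊆ {b} := by
  obtain ⟨γa, hγa⟩ := hu a
  obtain ⟨γb, hγb⟩ := hu b
  have hγa_disj : range γa ∩ K = ∅ :=
    subset_empty_iff.1 fun x hx => ha (hγa hx ▸ hx.2)
  refine ⟨γa.symm.trans γb, ?_⟩
  rw [Path.trans_range, Path.symm_range, union_inter_distrib_right, hγa_disj, empty_union]
  exact hγb

theorem LinearMap.segment_inter_setOf_eq_subset {E : Type*} [AddCommGroup E] [Module ℝ E]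
    (f : E →ₗ[ℝ] ℝ) {c : ℝ} {x y : E} (hx : c ≤ f x) (hy : c < f y) :
    [x -[ℝ] y] ∩ {z | f z = c} ⊆ {x} := by
  rintro _ ⟨⟨s, t, hs, ht, hst, rfl⟩, hz⟩
  simp only [mem_ofPred_eq, map_add, map_smul, smul_eq_mul] at hz
  have hsplit : s * (f x - c) + t * (f y - c) = 0 := by linear_combination hz - c * hst
  have hty : t * (f y - c) = 0 := by
    linarith [mul_nonneg hs (sub_nonneg.2 hx), mul_nonneg ht (sub_nonneg.2 hy.le)]
  have ht0 : t = 0 := (mul_eq_zero.1 hty).resolve_right (sub_pos.2 hy).ne'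
  simp [ht0, show s = 1 by linarith]

section LevelSet

variable {E : Type*} [AddCommGroup E] [Module ℝ E] [TopologicalSpace E] [ContinuousAdd E]
  [ContinuousSMul ℝ E] {K : Set E} (f : E →ₗ[ℝ] ℝ) {c : ℝ}

theorem exists_path_range_inter_subset_of_lt_apply (hK : K ⊆ {x | f x = c}) {z : E}
    (hz : f z = c) (hzK : z ∉ K) {u : E} (hu : c < f u) (q : E) :
    ∃ γ : Path u q, range γ ∩ K ⊆ {q} := by
  rcases le_or_gt c (f q) with hq | hq
  · refine ⟨Path.segment u q, ?_⟩
    rw [Path.range_segment, segment_symm]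
    exact (inter_subset_inter_right _ hK).trans (f.segment_inter_setOf_eq_subset hq hu)
  · refine ⟨(Path.segment u z).trans (Path.segment z q), ?_⟩
    have hzu : [u -[ℝ] z] ∩ {x | f x = c} ⊆ {z} := by
      rw [segment_symm]
      exact f.segment_inter_setOf_eq_subset hz.ge hu
    have hzq : [z -[ℝ] q] ∩ {x | f x = c} ⊆ {z} := by
      simpa using (-f).segment_inter_setOf_eq_subset (c := -c) (by simp [hz]) (by simpa using hq)
    rw [Path.trans_range, Path.range_segment, Path.range_segment, union_inter_distrib_right]
    intro x hx
    have : x = z := by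
      rcases hx with hx | hx
      · exact hzu ⟨hx.1, hK hx.2⟩
      · exact hzq ⟨hx.1, hK hx.2⟩
    exact absurd (this ▸ hx.elim And.right And.right) hzK

end LevelSet

theorem AffineSubspace.exists_linearMap_ne_zero_forall_mem_eq {𝕜 V : Type*} [Field 𝕜]
    [AddCommGroup V] [Module 𝕜 V] {P : AffineSubspace 𝕜 V} (hP : P.direction ≠ ⊤) {x₀ : V}
    (hx₀ : x₀ ∈ P) : ∃ f : V →ₗ[𝕜] 𝕜, f ≠ 0 ∧ ∀ x ∈ P, f x = f x₀ := by
  obtain ⟨f, hf, hPf⟩ := P.direction.exists_le_ker_of_lt_top hP.lt_top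
  refine ⟨f, hf, fun x hx => ?_⟩
  rw [← sub_eq_zero, ← map_sub]
  exact hPf (P.vsub_mem_direction hx hx₀)

theorem AffineSubspace.not_isBounded {E : Type*} [NormedAddCommGroup E] [NormedSpace ℝ E]
    {P : AffineSubspace ℝ E} (hP : P.direction ≠ ⊥) : ¬IsBounded (P : Set E) := by
  intro hbd
  obtain ⟨x₀, hx₀⟩ := P.nonempty_iff_ne_bot.2 fun hP' => hP (hP' ▸ AffineSubspace.direction_bot ..)
  obtain ⟨v, hv, hv0⟩ := P.direction.ne_bot_iff.1 hP
  obtain ⟨R, hR⟩ := isBounded_iff_forall_norm_le.1 hbd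
  set t := (2 * |R| + 1) / ‖v‖
  have hmem : t • v + x₀ ∈ P := P.vadd_mem_of_mem_direction (P.direction.smul_mem t hv) hx₀
  have hnorm : ‖t • v‖ = 2 * |R| + 1 := by
    rw [norm_smul, Real.norm_eq_abs, abs_of_pos (by positivity), div_mul_cancel₀]
    exact norm_ne_zero_iff.2 hv0
  have : ‖t • v‖ ≤ ‖t • v + x₀‖ + ‖x₀‖ := norm_le_add_norm_add _ _
  linarith [hR _ hmem, hR _ hx₀, le_abs_self R]

theorem AffineSubspace.exists_path_range_inter_subset {E : Type*} [NormedAddCommGroup E]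
    [NormedSpace ℝ E] {P : AffineSubspace ℝ E} (htop : P.direction ≠ ⊤) (hbot : P.direction ≠ ⊥)
    {K : Set E} (hKP : K ⊆ P) (hK : IsBounded K) {a : E} (ha : a ∉ K) (b : E) :
    ∃ γ : Path a b, range γ ∩ K ⊆ {b} := by
  obtain ⟨z, hzP, hzK⟩ : ∃ z ∈ P, z ∉ K :=
    not_subset.1 fun hPK => P.not_isBounded hbot (hK.subset hPK)
  obtain ⟨f, hf, hfP⟩ := P.exists_linearMap_ne_zero_forall_mem_eq htop hzP
  obtain ⟨v, hv⟩ : ∃ v, f v ≠ 0 := by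
    by_contra! h
    exact hf (LinearMap.ext h)
  have hu : f z < f (z + (f v)⁻¹ • v) := by simp [hv]
  exact exists_path_range_inter_subset_of_hub
    (exists_path_range_inter_subset_of_lt_apply f (fun x hx => hfP x (hKP hx)) rfl hzK hu) ha b

/-- A bounded subset `K` of an affine plane in ℝ³ (e.g. a 'flattened cube')
encloses no solid: (a) its complement is path-connected; (b) every point of `K`
is reachable from any external base point `p`; consequently the set
`O = pathComponentIn p Kᶜ ∪ {q ∈ K | reachable}` is all of ℝ³ and the solid outer
hull (the frontier of `O`) is empty — a flat model is not printable. -/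
theorem flat_model_not_printable (K : Set (EuclideanSpace ℝ (Fin 3)))
    (P : AffineSubspace ℝ (EuclideanSpace ℝ (Fin 3)))
    (hP : Module.finrank ℝ P.direction = 2) (hKP : K ⊆ (P : Set (EuclideanSpace ℝ (Fin 3))))
    (hKbd : Bornology.IsBounded K)
    (p : EuclideanSpace ℝ (Fin 3)) (hp : p ∉ K) :
    IsPathConnected Kᶜ ∧
    (∀ q ∈ K, ReachableFrom K p q) ∧
    pathComponentIn Kᶜ p ∪ {q ∈ K | ReachableFrom K p q} = Set.univ ∧
    frontier (pathComponentIn Kᶜ p ∪ {q ∈ K | ReachableFrom K p q}) = ∅ := by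
  have htop : P.direction ≠ ⊤ := by
    intro h
    rw [h, finrank_top, finrank_euclideanSpace_fin] at hP
    omega
  have hbot : P.direction ≠ ⊥ := by
    intro h
    rw [h, finrank_bot] at hP
    omega
  have hpath (q) : ∃ γ : Path p q, range γ ∩ K ⊆ {q} :=
    P.exists_path_range_inter_subset htop hbot hKP hKbd hp q
  have hreach (q) : ReachableFrom K p q :=
    let ⟨γ, hγ⟩ := hpath q
    ⟨γ, fun t ht => hγ ⟨mem_range_self t, ht⟩⟩
  have hconn : IsPathConnected Kᶜ := by
    refine ⟨p, hp, fun q hq => ?_⟩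
    obtain ⟨γ, hγ⟩ := hreach q
    exact ⟨γ, fun t ht => hq (hγ t ht ▸ ht)⟩
  have huniv : pathComponentIn Kᶜ p ∪ {q ∈ K | ReachableFrom K p q} = univ := by
    refine eq_univ_of_forall fun q => ?_
    by_cases hq : q ∈ K
    · exact Or.inr ⟨hq, hreach q⟩
    · exact Or.inl (hconn.joinedIn p hp q hq)
  exact ⟨hconn, fun q _ => hreach q, huniv, by rw [huniv, frontier_univ]⟩
end

section
/- Let a, b, c ∈ ℝ³ be affinely independent points, let m be the midpoint of a and b, and let P = {x ∈ ℝ³ : ⟪x − m, b − a⟫ = 0} be the plane through m orthogonal to the edge from a to b. Then there exists a point w ∈ P with w ≠ m such that the intersection of the triangle conv{a, b, c} with P equals the closed segment from m to w. In particular the cross-section of a nondegenerate triangle by the orthogonal bisector plane of one of its edges is a nondegenerate segment having the edge midpoint as an endpoint. -/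
open scoped RealInnerProductSpace

/-- Membership in the convex hull of three points. -/
lemma mem_triple_hull {E : Type*} [AddCommGroup E] [Module ℝ E] (a b c x : E) :
    x ∈ convexHull ℝ ({a, b, c} : Set E) ↔
      ∃ α β γ : ℝ, 0 ≤ α ∧ 0 ≤ β ∧ 0 ≤ γ ∧ α + β + γ = 1 ∧
        α • a + β • b + γ • c = x := by
  rw [show ({a, b, c} : Set E) = insert a {b, c} from rfl,
    convexHull_insert ⟨b, Set.mem_insert _ _⟩, convexHull_pair, mem_convexJoin]
  constructor
  · rintro ⟨p, hp, y, ⟨u, v, hu, hv, huv, rfl⟩, θ, η, hθ, hη, hθη, rfl⟩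
    rw [Set.mem_singleton_iff] at hp
    subst hp
    exact ⟨θ, η * u, η * v, hθ, mul_nonneg hη hu, mul_nonneg hη hv,
      by nlinarith, by module⟩
  · rintro ⟨α, β, γ, hα, hβ, hγ, hsum, rfl⟩
    rcases eq_or_lt_of_le (add_nonneg hβ hγ) with hD | hD
    · have hβ0 : β = 0 := by linarith
      have hγ0 : γ = 0 := by linarith
      have hα1 : α = 1 := by linarith
      refine ⟨a, rfl, b, ⟨1, 0, by norm_num, by norm_num, by norm_num, by module⟩,
        1, 0, by norm_num, by norm_num, by norm_num, ?_⟩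
      rw [hβ0, hγ0, hα1]; module
    · refine ⟨a, rfl, (β / (β + γ)) • b + (γ / (β + γ)) • c,
        ⟨β / (β + γ), γ / (β + γ), div_nonneg hβ hD.le, div_nonneg hγ hD.le,
          by field_simp, rfl⟩,
        α, β + γ, hα, hD.le, by linarith, ?_⟩
      rw [smul_add, smul_smul, smul_smul,
        mul_div_cancel₀ _ hD.ne', mul_div_cancel₀ _ hD.ne', add_assoc]

/-- The main construction, assuming the third vertex is on the nonnegative
side of the plane. -/
lemma aux_triangle {F : Type*} [NormedAddCommGroup F] [InnerProductSpace ℝ F]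
    (a b c : F)
    (hind : ∀ p q r : ℝ, p + q + r = 0 → p • a + q • b + r • c = 0 →
      p = 0 ∧ q = 0 ∧ r = 0)
    (hs : 0 ≤ ⟪c - midpoint ℝ a b, b - a⟫) :
    ∃ w : F,
      ⟪w - midpoint ℝ a b, b - a⟫ = 0 ∧
      w ≠ midpoint ℝ a b ∧
      convexHull ℝ {a, b, c} ∩ {x : F | ⟪x - midpoint ℝ a b, b - a⟫ = 0}
        = segment ℝ (midpoint ℝ a b) w := by
  set m := midpoint ℝ a b with hm_def
  have hm : m = (1/2 : ℝ) • a + (1/2 : ℝ) • b := by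
    rw [hm_def, midpoint_eq_smul_add, invOf_eq_inv, smul_add]; norm_num
  set v := b - a with hv_def
  have hab : a ≠ b := by
    intro hab
    have := (hind 1 (-1) 0 (by ring) (by rw [hab]; module)).1
    norm_num at this
  have hv : v ≠ 0 := sub_ne_zero.mpr (Ne.symm hab)
  set T : ℝ := ⟪v, v⟫ with hT_def
  have hT : 0 < T := by
    rw [hT_def, real_inner_self_eq_norm_sq]
    exact pow_pos (norm_pos_iff.mpr hv) 2
  set s : ℝ := ⟪c - m, v⟫ with hs_def
  -- inner products of the vertices with the plane functional
  have fa : ⟪a - m, v⟫ = -(T/2) := by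
    have : a - m = (-(1/2) : ℝ) • v := by rw [hm, hv_def]; module
    rw [this, real_inner_smul_left]; ring
  have fb : ⟪b - m, v⟫ = T/2 := by
    have : b - m = ((1/2) : ℝ) • v := by rw [hm, hv_def]; module
    rw [this, real_inner_smul_left]; ring
  -- the plane functional on a convex combination
  have key : ∀ α β γ : ℝ, α + β + γ = 1 →
      ⟪(α • a + β • b + γ • c) - m, v⟫ = (β - α) * (T/2) + γ * s := by
    intro α β γ hsum
    have hx : (α • a + β • b + γ • c) - m
        = α • (a - m) + β • (b - m) + γ • (c - m) := by
      linear_combination (norm := module) hsum • m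
    rw [hx, inner_add_left, inner_add_left, real_inner_smul_left,
      real_inner_smul_left, real_inner_smul_left, fa, fb, ← hs_def]
    ring
  set D : ℝ := s + T/2 with hD_def
  have hD : 0 < D := by positivity
  set ca : ℝ := s / D with hca_def
  set cc : ℝ := (T/2) / D with hcc_def
  have hca : 0 ≤ ca := div_nonneg hs hD.le
  have hcc : 0 < cc := div_pos (by positivity) hD
  have hsum1 : ca + cc = 1 := by rw [hca_def, hcc_def, hD_def]; field_simp
  set w : F := ca • a + cc • c with hw_def
  have fw : ⟪w - m, v⟫ = 0 := by
    have := key ca 0 cc (by linarith)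
    simp only [zero_smul, add_zero] at this
    rw [hw_def]
    rw [this, hca_def, hcc_def]
    ring
  refine ⟨w, fw, ?_, ?_⟩
  · -- w ≠ m
    intro hwm
    have hvec : (ca - 1/2) • a + (-(1/2) : ℝ) • b + cc • c = 0 := by
      have : ca • a + cc • c = (1/2 : ℝ) • a + (1/2 : ℝ) • b := by
        rw [← hw_def, ← hm, hwm]
      linear_combination (norm := module) this
    have := (hind _ _ _ (by linarith) hvec).2.2
    exact absurd this hcc.ne'
  · ext x
    simp only [Set.mem_inter_iff, Set.mem_setOf_eq]
    constructor
    · rintro ⟨hxhull, hxpl⟩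
      obtain ⟨α, β, γ, hα, hβ, hγ, hsum, hx⟩ := (mem_triple_hull a b c x).mp hxhull
      rw [← hx, key α β γ hsum] at hxpl
      have hγs : 0 ≤ γ * s := mul_nonneg hγ hs
      have hβα : β ≤ α := by nlinarith
      have hβ2 : 2 * β ≤ 1 := by linarith
      have hγD : γ * D = (1 - 2*β) * (T/2) := by
        rw [hD_def]; nlinarith
      have h1 : (1 - 2*β) * cc = γ := by
        rw [hcc_def, ← mul_div_assoc, div_eq_iff hD.ne']
        linear_combination hγD.symm
      have h2 : β + (1 - 2*β) * ca = α := by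
        have hca' : (1 - 2*β) * ca = (1 - 2*β) - γ := by
          rw [hca_def, ← mul_div_assoc, div_eq_iff hD.ne']
          linear_combination hγD
        rw [hca']; linarith
      refine ⟨2*β, 1 - 2*β, by linarith, by linarith, by ring, ?_⟩
      rw [hm, hw_def, ← hx]
      linear_combination (norm := module) h2 • a + h1 • c
    · rintro ⟨θ, η, hθ, hη, hθη, hx⟩
      have hxc : (θ/2 + η * ca) • a + (θ/2) • b + (η * cc) • c = x := by
        rw [← hx, hm, hw_def]; module
      have hcsum : (θ/2 + η * ca) + θ/2 + η * cc = 1 := by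
        have : θ + η * (ca + cc) = 1 := by rw [hsum1]; linarith
        linarith [this]
      constructor
      · exact (mem_triple_hull a b c x).mpr
          ⟨_, _, _, by positivity, by positivity,
            (mul_nonneg hη hcc.le), hcsum, hxc⟩
      · rw [← hxc, key _ _ _ hcsum, hca_def, hcc_def]
        ring
/-- Let `a, b, c` be affinely independent points of ℝ³, `m` the midpoint of `a`
and `b`, and `P` the plane through `m` orthogonal to the edge from `a` to `b`.
Then there is a point `w ∈ P`, `w ≠ m`, such that the intersection of the
triangle `conv {a, b, c}` with `P` is the closed segment from `m` to `w`: the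
cross-section of a nondegenerate triangle by the orthogonal bisector plane of one
of its edges is a nondegenerate segment with the edge midpoint as an endpoint. -/
theorem triangle_inter_bisector_plane (a b c : EuclideanSpace ℝ (Fin 3))
    (h : AffineIndependent ℝ ![a, b, c]) :
    ∃ w : EuclideanSpace ℝ (Fin 3),
      ⟪w - midpoint ℝ a b, b - a⟫ = 0 ∧
      w ≠ midpoint ℝ a b ∧
      convexHull ℝ {a, b, c} ∩
          {x : EuclideanSpace ℝ (Fin 3) | ⟪x - midpoint ℝ a b, b - a⟫ = 0}
        = segment ℝ (midpoint ℝ a b) w := by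
  have hind : ∀ p q r : ℝ, p + q + r = 0 → p • a + q • b + r • c = 0 →
      p = 0 ∧ q = 0 ∧ r = 0 := by
    intro p q r hsum hvec
    have := affineIndependent_iff.mp h Finset.univ ![p, q, r]
      (by simp [Fin.sum_univ_three, hsum])
      (by simpa [Fin.sum_univ_three] using hvec)
    exact ⟨this 0 (Finset.mem_univ _), this 1 (Finset.mem_univ _),
      this 2 (Finset.mem_univ _)⟩
  rcases le_or_gt 0 ⟪c - midpoint ℝ a b, b - a⟫ with hs | hs
  · exact aux_triangle a b c hind hs
  · have hind' : ∀ p q r : ℝ, p + q + r = 0 → p • b + q • a + r • c = 0 →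
        p = 0 ∧ q = 0 ∧ r = 0 := by
      intro p q r hsum hvec
      obtain ⟨h1, h2, h3⟩ := hind q p r (by linarith)
        (by linear_combination (norm := module) hvec)
      exact ⟨h2, h1, h3⟩
    have hs' : 0 ≤ ⟪c - midpoint ℝ b a, a - b⟫ := by
      rw [midpoint_comm (R := ℝ) b a, show a - b = -(b - a) by abel, inner_neg_right]
      linarith
    obtain ⟨w, h1, h2, h3⟩ := aux_triangle b a c hind' hs'
    rw [midpoint_comm (R := ℝ) b a] at h1 h2 h3
    refine ⟨w, ?_, h2, ?_⟩
    · rw [show b - a = -(a - b) by abel, inner_neg_right, h1, neg_zero]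
    · rw [show ({a, b, c} : Set (EuclideanSpace ℝ (Fin 3))) = {b, a, c} from
        Set.insert_comm a b {c},
        show {x : EuclideanSpace ℝ (Fin 3) | ⟪x - midpoint ℝ a b, b - a⟫ = 0}
          = {x : EuclideanSpace ℝ (Fin 3) | ⟪x - midpoint ℝ a b, a - b⟫ = 0} by
          ext x
          simp only [Set.mem_setOf_eq, show a - b = -(b - a) by abel,
            inner_neg_right, neg_eq_zero]]
      exact h3
end
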